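/- Let G be a bipartite false twin-free graph without isolated vertices. Then γ_t(G) = γ_gr^t(G) = 4 if and only if G is isomorphic to the graph K_{n,n} − M for some n ≥ 2, where M denotes a perfect matching of the complete bipartite graph K_{n,n}. -/

import Mathlib

/-- `S` is a total dominating set of `G`: every vertex has a neighbor in `S`. -/
def IsTotalDomSet {V : Type*} (G : SimpleGraph V) (S : Set V) : Prop :=
  ∀ v : V, ∃ u ∈ S, G.Adj v u

/-- `l` is a legal sequence of `G`: the vertices are distinct and every vertex
(except possibly the first) totally dominates a vertex not totally dominated
by the previous vertices. -/
def IsLegalSeq {V : Type*} (G : SimpleGraph V) (l : List V) : Prop :=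
  l.Nodup ∧ ∀ i : Fin l.length, 0 < (i : ℕ) →
    ∃ w : V, G.Adj (l.get i) w ∧ ∀ j : Fin l.length, (j : ℕ) < (i : ℕ) → ¬ G.Adj (l.get j) w

/-- `l` is a total dominating sequence of `G`. -/
def IsTotalDomSeq {V : Type*} (G : SimpleGraph V) (l : List V) : Prop :=
  IsLegalSeq G l ∧ IsTotalDomSet G {v | v ∈ l}

/-- The Grundy total domination number of `G`: the maximum length of a total
dominating sequence. -/
noncomputable def grundyTotalDomNum {V : Type*} (G : SimpleGraph V) : ℕ :=
  sSup {k : ℕ | ∃ l : List V, IsTotalDomSeq G l ∧ l.length = k}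

/-- The total domination number of `G`: the minimum cardinality of a total
dominating set. -/
noncomputable def totalDomNum {V : Type*} (G : SimpleGraph V) : ℕ :=
  sInf {k : ℕ | ∃ S : Set V, IsTotalDomSet G S ∧ S.ncard = k}

/-- `A`, `B` is a bipartition of `G`. -/
def IsBipartitionOf {V : Type*} (G : SimpleGraph V) (A B : Set V) : Prop :=
  (∀ v : V, (v ∈ A ∧ v ∉ B) ∨ (v ∈ B ∧ v ∉ A)) ∧
  ∀ ⦃u v : V⦄, G.Adj u v → (u ∈ A ∧ v ∈ B) ∨ (u ∈ B ∧ v ∈ A)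

/-- `G` has no false twins: distinct vertices have distinct open neighborhoods. -/
def FalseTwinFree {V : Type*} (G : SimpleGraph V) : Prop :=
  ∀ u v : V, u ≠ v → G.neighborSet u ≠ G.neighborSet v

/-- `G` has no isolated vertices. -/
def NoIsolatedVerts {V : Type*} (G : SimpleGraph V) : Prop :=
  ∀ v : V, ∃ u : V, G.Adj v u

/-- The graph `K_{n,n} − M`: the complete bipartite graph `K_{n,n}` minus a
perfect matching `M` (all perfect matchings give isomorphic graphs; here the
matching matches `Sum.inl i` with `Sum.inr i`). -/
def KnnMinusMatching (n : ℕ) : SimpleGraph (Fin n ⊕ Fin n) :=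
  SimpleGraph.fromRel (fun x y =>
    match x, y with
    | Sum.inl i, Sum.inr j => i ≠ j
    | _, _ => False)


/-!
In `K_{n,n} − M` every vertex misses exactly one vertex of the other side. Hence a total
dominating set needs two vertices on each side, and a legal sequence has at most two vertices on
each side: the new neighbour of a third one would be missed by the two earlier ones.

Conversely, a legal sequence extends to a total dominating sequence, so `γ_gr^t(G) = 4` bounds
every legal sequence by `4`. Let `A ∪ B` be a bipartition. False-twin-freeness and the absence of
isolated vertices yield legal sequences of length five unless
(i) two vertices of `B` dominate `A`, and
(ii) if `a ∈ A` misses `b` and `a'` hits `b`, then `a'` hits every other non-neighbour of `a`.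
By (i) and `γ_t(G) = 4` every vertex `a` misses some vertex on the other side (else `a` and the
two vertices of (i) form a total dominating set), and by (ii) any two such non-neighbours are
false twins. So non-adjacency is a perfect matching between `A` and `B`.
-/

section LegalSequences
variable {V : Type*} {G : SimpleGraph V}

lemma isLegalSeq_singleton (u : V) : IsLegalSeq G [u] :=
  ⟨List.nodup_singleton u, fun _ hi => by simp at hi⟩

lemma IsLegalSeq.concat {l : List V} {u w : V} (hl : IsLegalSeq G l) (huw : G.Adj u w)
    (hw : ∀ x ∈ l, ¬ G.Adj x w) : IsLegalSeq G (l ++ [u]) := by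
  refine ⟨hl.1.append (List.nodup_singleton u) ?_, fun i hi => ?_⟩
  · simpa using fun hu => hw u hu huw
  have hi' : (i : ℕ) < l.length + 1 := by simpa using i.isLt
  rcases Nat.lt_succ_iff_lt_or_eq.mp hi' with hil | hil
  · obtain ⟨w', hw'i, hw'j⟩ := hl.2 ⟨i, hil⟩ hi
    refine ⟨w', by simpa [List.getElem_append_left hil] using hw'i, fun j hj => ?_⟩
    simpa [List.getElem_append_left (hj.trans hil)] using hw'j ⟨j, hj.trans hil⟩ hj
  · refine ⟨w, by simpa [hil] using huw, fun j hj => ?_⟩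
    simpa [List.getElem_append_left (hil ▸ hj)] using hw _ (List.getElem_mem (hil ▸ hj))

lemma IsLegalSeq.exists_isTotalDomSeq [Fintype V] (hiso : NoIsolatedVerts G) {l : List V}
    (hl : IsLegalSeq G l) : ∃ l', IsTotalDomSeq G l' ∧ l.length ≤ l'.length := by
  by_cases hdom : IsTotalDomSet G {v | v ∈ l}
  · exact ⟨l, ⟨hl, hdom⟩, le_rfl⟩
  obtain ⟨x, hx⟩ : ∃ x, ∀ y ∈ l, ¬ G.Adj x y := by simpa [IsTotalDomSet] using hdom
  obtain ⟨u, hxu⟩ := hiso x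
  have hl' : IsLegalSeq G (l ++ [u]) := hl.concat hxu.symm fun y hy h => hx y hy h.symm
  have : Fintype.card V - (l ++ [u]).length < Fintype.card V - l.length := by
    have := hl'.1.length_le_card
    simp only [List.length_append, List.length_singleton] at this ⊢
    omega
  obtain ⟨l', hl'dom, hlen⟩ := hl'.exists_isTotalDomSeq hiso
  exact ⟨l', hl'dom, (Nat.le_succ _).trans (by simpa using hlen)⟩
termination_by Fintype.card V - l.length

lemma IsLegalSeq.length_le_grundyTotalDomNum [Fintype V] (hiso : NoIsolatedVerts G)
    {l : List V} (hl : IsLegalSeq G l) : l.length ≤ grundyTotalDomNum G := by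
  obtain ⟨l', hl', hlen⟩ := hl.exists_isTotalDomSeq hiso
  have hbdd : BddAbove {k | ∃ l : List V, IsTotalDomSeq G l ∧ l.length = k} :=
    ⟨Fintype.card V, by rintro k ⟨l, hl, rfl⟩; exact hl.1.1.length_le_card⟩
  exact hlen.trans (le_csSup hbdd ⟨l', hl', rfl⟩)

lemma IsTotalDomSeq.grundyTotalDomNum_eq {l : List V} (hl : IsTotalDomSeq G l)
    (hmax : ∀ l', IsTotalDomSeq G l' → l'.length ≤ l.length) :
    grundyTotalDomNum G = l.length :=
  IsGreatest.csSup_eq ⟨⟨l, hl, rfl⟩, by rintro _ ⟨l', hl', rfl⟩; exact hmax l' hl'⟩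

lemma ncard_setOf_mem_of_nodup {l : List V} (hl : l.Nodup) : {v | v ∈ l}.ncard = l.length := by
  classical
  rw [← List.coe_toFinset, Set.ncard_coe_finset, List.toFinset_card_of_nodup hl]

lemma totalDomNum_le_ncard {S : Set V} (hS : IsTotalDomSet G S) : totalDomNum G ≤ S.ncard :=
  Nat.sInf_le ⟨S, hS, rfl⟩

lemma IsTotalDomSeq.totalDomNum_le_length {l : List V} (hl : IsTotalDomSeq G l) :
    totalDomNum G ≤ l.length :=
  ncard_setOf_mem_of_nodup hl.1.1 ▸ totalDomNum_le_ncard hl.2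

end LegalSequences

section Isomorphisms
variable {V W : Type*} {G : SimpleGraph V} {H : SimpleGraph W}

lemma IsTotalDomSet.image (e : G ≃g H) {S : Set V} (hS : IsTotalDomSet G S) :
    IsTotalDomSet H (e '' S) := fun v => by
  obtain ⟨u, hu, hvu⟩ := hS (e.symm v)
  exact ⟨e u, Set.mem_image_of_mem e hu, by simpa using e.map_adj_iff.mpr hvu⟩

lemma IsLegalSeq.map (e : G ≃g H) {l : List V} (hl : IsLegalSeq G l) :
    IsLegalSeq H (l.map e) := by
  refine ⟨hl.1.map e.injective, fun i hi => ?_⟩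
  have hil : (i : ℕ) < l.length := by simpa using i.isLt
  obtain ⟨w, hiw, hjw⟩ := hl.2 ⟨i, hil⟩ hi
  refine ⟨e w, by simpa [e.map_adj_iff] using hiw, fun j hj => ?_⟩
  simpa [e.map_adj_iff] using hjw ⟨j, hj.trans hil⟩ hj

lemma IsTotalDomSeq.map (e : G ≃g H) {l : List V} (hl : IsTotalDomSeq G l) :
    IsTotalDomSeq H (l.map e) :=
  ⟨hl.1.map e, by simpa [Set.image] using hl.2.image e⟩

lemma totalDomNum_congr (e : G ≃g H) : totalDomNum G = totalDomNum H :=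
  congrArg sInf <| Set.ext fun _ =>
    ⟨fun ⟨S, hS, hk⟩ => ⟨e '' S, hS.image e,
        (Set.ncard_image_of_injective S e.injective).trans hk⟩,
      fun ⟨S, hS, hk⟩ => ⟨e.symm '' S, hS.image e.symm,
        (Set.ncard_image_of_injective S e.symm.injective).trans hk⟩⟩

lemma grundyTotalDomNum_congr (e : G ≃g H) : grundyTotalDomNum G = grundyTotalDomNum H :=
  congrArg sSup <| Set.ext fun _ =>
    ⟨fun ⟨l, hl, hk⟩ => ⟨l.map e, hl.map e, (l.length_map _).trans hk⟩,
      fun ⟨l, hl, hk⟩ => ⟨l.map e.symm, hl.map e.symm, (l.length_map _).trans hk⟩⟩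

end Isomorphisms

namespace KnnMinusMatching
variable {n : ℕ}

@[simp] lemma adj_inl_inr {i j : Fin n} :
    (KnnMinusMatching n).Adj (.inl i) (.inr j) ↔ i ≠ j := by
  simp [KnnMinusMatching]

@[simp] lemma adj_inr_inl {i j : Fin n} :
    (KnnMinusMatching n).Adj (.inr i) (.inl j) ↔ i ≠ j := by
  simp [KnnMinusMatching, eq_comm]

@[simp] lemma not_adj_inl_inl {i j : Fin n} : ¬ (KnnMinusMatching n).Adj (.inl i) (.inl j) := by
  simp [KnnMinusMatching]

@[simp] lemma not_adj_inr_inr {i j : Fin n} : ¬ (KnnMinusMatching n).Adj (.inr i) (.inr j) := by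
  simp [KnnMinusMatching]

lemma eq_of_isLeft_eq_of_not_adj {x y z w : Fin n ⊕ Fin n} (hxz : x.isLeft = z.isLeft)
    (hyz : y.isLeft = z.isLeft) (hzw : (KnnMinusMatching n).Adj z w)
    (hxw : ¬ (KnnMinusMatching n).Adj x w) (hyw : ¬ (KnnMinusMatching n).Adj y w) : x = y := by
  rcases x with x | x <;> rcases y with y | y <;> rcases z with z | z <;> rcases w with w | w <;>
    simp_all

lemma exists_three_eq_of_fin_five (f : Fin 5 → Bool) :
    ∃ i j k : Fin 5, (i : ℕ) < j ∧ (j : ℕ) < k ∧ f i = f k ∧ f j = f k := by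
  revert f; decide

lemma length_le_four_of_isLegalSeq {l : List (Fin n ⊕ Fin n)}
    (hl : IsLegalSeq (KnnMinusMatching n) l) : l.length ≤ 4 := by
  by_contra! hlen
  obtain ⟨i, j, k, hij, hjk, hik, hjk'⟩ :=
    exists_three_eq_of_fin_five fun t => (l[(t : ℕ)]'(by omega)).isLeft
  obtain ⟨w, hkw, hw⟩ := hl.2 ⟨k, by omega⟩ (Nat.zero_lt_of_lt hjk)
  have hxy := eq_of_isLeft_eq_of_not_adj hik hjk' hkw (hw ⟨i, by omega⟩ (hij.trans hjk))
    (hw ⟨j, by omega⟩ hjk)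
  simp only [hl.1.getElem_inj_iff] at hxy
  omega

lemma exists_isTotalDomSeq_length_eq_four (hn : 2 ≤ n) :
    ∃ l, IsTotalDomSeq (KnnMinusMatching n) l ∧ l.length = 4 := by
  obtain ⟨m, rfl⟩ : ∃ m, n = m + 2 := ⟨n - 2, by omega⟩
  refine ⟨[.inl 0, .inl 1, .inr 0, .inr 1], ⟨?_, ?_⟩, rfl⟩
  · exact (isLegalSeq_singleton _
      |>.concat (w := .inr 0) (by simp) (by simp)
      |>.concat (w := .inl 1) (by simp) (by simp)
      |>.concat (w := .inl 0) (by simp) (by simp))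
  · rintro (i | i) <;> by_cases h : i = 0 <;> simp [h]

lemma four_le_ncard_of_isTotalDomSet (hn : 0 < n) {S : Set (Fin n ⊕ Fin n)}
    (hS : IsTotalDomSet (KnnMinusMatching n) S) : 4 ≤ S.ncard := by
  obtain ⟨_ | j₁, hj₁, h₁⟩ := hS (.inl ⟨0, hn⟩); · simp at h₁
  obtain ⟨_ | j₂, hj₂, h₂⟩ := hS (.inl j₁); · simp at h₂
  obtain ⟨i₁ | _, hi₁, h₃⟩ := hS (.inr ⟨0, hn⟩); swap; · simp at h₃
  obtain ⟨i₂ | _, hi₂, h₄⟩ := hS (.inr i₁); swap; · simp at h₄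
  have hnodup : [Sum.inl i₁, .inl i₂, .inr j₁, .inr j₂].Nodup := by simp_all
  calc 4 = {v | v ∈ [.inl i₁, .inl i₂, .inr j₁, .inr j₂]}.ncard :=
        (ncard_setOf_mem_of_nodup hnodup).symm
    _ ≤ S.ncard := Set.ncard_le_ncard (by simp_all [Set.subset_def])

lemma totalDomNum_eq (hn : 2 ≤ n) : totalDomNum (KnnMinusMatching n) = 4 := by
  obtain ⟨l, hl, hlen⟩ := exists_isTotalDomSeq_length_eq_four hn
  exact le_antisymm (hlen ▸ hl.totalDomNum_le_length) <| le_csInf ⟨_, _, hl.2, rfl⟩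
    fun _ ⟨_, hS, hk⟩ => hk ▸ four_le_ncard_of_isTotalDomSet (by omega) hS

lemma grundyTotalDomNum_eq (hn : 2 ≤ n) : grundyTotalDomNum (KnnMinusMatching n) = 4 := by
  obtain ⟨l, hl, hlen⟩ := exists_isTotalDomSeq_length_eq_four hn
  exact hlen ▸ hl.grundyTotalDomNum_eq fun l' hl' => hlen ▸ length_le_four_of_isLegalSeq hl'.1

end KnnMinusMatching

section Bipartition
variable {V : Type*} {G : SimpleGraph V} {A B : Set V}

lemma IsBipartitionOf.symm (h : IsBipartitionOf G A B) : IsBipartitionOf G B A :=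
  ⟨fun v => (h.1 v).symm, fun _ _ huv => (h.2 huv).symm⟩

lemma IsBipartitionOf.mem_right_iff_notMem_left (h : IsBipartitionOf G A B) {v : V} :
    v ∈ B ↔ v ∉ A := by
  rcases h.1 v with hv | hv <;> tauto

lemma IsBipartitionOf.mem_right_of_adj (h : IsBipartitionOf G A B) {a w : V} (ha : a ∈ A)
    (haw : G.Adj a w) : w ∈ B := by
  rcases h.2 haw with hw | hw
  · exact hw.2
  · exact absurd ha (h.mem_right_iff_notMem_left.1 hw.1)

lemma IsBipartitionOf.not_adj_of_mem_left (h : IsBipartitionOf G A B) {u v : V} (hu : u ∈ A)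
    (hv : v ∈ A) : ¬ G.Adj u v :=
  fun huv => h.mem_right_iff_notMem_left.1 (h.mem_right_of_adj hu huv) hv

lemma FalseTwinFree.exists_adj_not_adj (hftf : FalseTwinFree G) {S : Set V}
    (hS : S.Nontrivial) : ∃ x ∈ S, ∃ y ∈ S, ∃ w, G.Adj y w ∧ ¬ G.Adj x w := by
  obtain ⟨u, hu, v, hv, huv⟩ := hS
  by_contra! h
  exact hftf u v huv (Set.ext fun w => ⟨h v hv u hu w, h u hu v hv w⟩)

lemma IsBipartitionOf.nonempty_iso_knnMinusMatching [Finite V] (hbip : IsBipartitionOf G A B)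
    (hA : ∀ a : A, ∃! b : B, ¬ G.Adj a b) (hB : ∀ b : B, ∃! a : A, ¬ G.Adj b a) :
    Nonempty (G ≃g KnnMinusMatching (Nat.card A)) := by
  classical
  choose f hf using hA
  have hf_eq (a : A) (b : B) : f a = b ↔ ¬ G.Adj a b :=
    ⟨fun h => h ▸ (hf a).1, fun h => ((hf a).2 b h).symm⟩
  let σ : A ≃ B := Equiv.ofBijective f <| (Function.bijective_iff_existsUnique f).2 fun b => by
    simpa [hf_eq, G.adj_comm] using hB b
  let eA := Finite.equivFin A
  let ψ : V ≃ A ⊕ B := (Equiv.sumCompl (· ∈ A)).symm.trans <| Equiv.sumCongr (Equiv.refl _)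
    (Equiv.subtypeEquivRight fun _ => hbip.mem_right_iff_notMem_left.symm)
  refine ⟨⟨ψ.trans (Equiv.sumCongr eA (σ.symm.trans eA)), fun {u v} => ?_⟩⟩
  obtain ⟨p, rfl⟩ := ψ.symm.surjective u
  obtain ⟨q, rfl⟩ := ψ.symm.surjective v
  simp only [Equiv.trans_apply, Equiv.apply_symm_apply]
  rcases p with a | b <;> rcases q with a' | b' <;>
    simp only [ψ, Equiv.symm_trans, Equiv.sumCongr_symm, Equiv.refl_symm, Equiv.symm_symm,
      Equiv.trans_apply, Equiv.sumCongr_apply, Equiv.coe_refl, Sum.map_inl, Sum.map_inr, id_eq,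
      Equiv.sumCompl_apply_inl, Equiv.sumCompl_apply_inr, Equiv.subtypeEquivRight_symm_apply_coe,
      KnnMinusMatching.adj_inl_inr, KnnMinusMatching.adj_inr_inl, KnnMinusMatching.not_adj_inl_inl,
      KnnMinusMatching.not_adj_inr_inr, ne_eq, EmbeddingLike.apply_eq_iff_eq, false_iff]
  · exact hbip.not_adj_of_mem_left a.2 a'.2
  · rw [Equiv.eq_symm_apply, Equiv.ofBijective_apply, hf_eq, not_not]
  · rw [Equiv.symm_apply_eq, eq_comm, Equiv.ofBijective_apply, hf_eq, not_not, G.adj_comm]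
  · exact hbip.symm.not_adj_of_mem_left b.2 b'.2

end Bipartition

section ForwardDirection
variable {V : Type*} {G : SimpleGraph V} {A B : Set V}

lemma IsBipartitionOf.exists_pair_dominating (hbip : IsBipartitionOf G A B) (hftf : FalseTwinFree G)
    (hiso : NoIsolatedVerts G) (h4 : ∀ l, IsLegalSeq G l → l.length ≤ 4) {b₀ : V}
    (hb₀ : b₀ ∈ B) :
    ∃ b₁ ∈ B, ∃ b₂ ∈ B, ∀ a ∈ A, G.Adj a b₁ ∨ G.Adj a b₂ := by
  by_contra! H
  obtain ⟨a₀, ha₀, ha₀b₀, -⟩ := H b₀ hb₀ b₀ hb₀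
  obtain ⟨a₁, hb₀a₁⟩ := hiso b₀
  obtain ⟨b₁, ha₀b₁⟩ := hiso a₀
  have hA : A.Nontrivial := ⟨a₁, hbip.symm.mem_right_of_adj hb₀ hb₀a₁, a₀, ha₀,
    by rintro rfl; exact ha₀b₀ hb₀a₁.symm⟩
  have hB : B.Nontrivial := ⟨b₀, hb₀, b₁, hbip.mem_right_of_adj ha₀ ha₀b₁,
    by rintro rfl; exact ha₀b₀ ha₀b₁⟩
  obtain ⟨y₁, hy₁, y₂, hy₂, wy, hy₂wy, hy₁wy⟩ := hftf.exists_adj_not_adj hB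
  obtain ⟨x₁, hx₁, x₂, hx₂, wx, hx₂wx, hx₁wx⟩ := hftf.exists_adj_not_adj hA
  obtain ⟨a, ha, hay₁, hay₂⟩ := H y₁ hy₁ y₂ hy₂
  obtain ⟨y₃, hay₃⟩ := hiso a
  obtain ⟨u, hx₁u⟩ := hiso x₁
  have hy₃ := hbip.mem_right_of_adj ha hay₃
  have hu := hbip.mem_right_of_adj hx₁ hx₁u
  have hwx := hbip.mem_right_of_adj hx₂ hx₂wx
  have hseq : IsLegalSeq G [y₁, y₂, y₃, x₁, x₂] := isLegalSeq_singleton y₁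
    |>.concat hy₂wy (by simpa using hy₁wy)
    |>.concat hay₃.symm (by simpa using ⟨mt G.adj_symm hay₁, mt G.adj_symm hay₂⟩)
    |>.concat hx₁u (by simp [hbip.symm.not_adj_of_mem_left, *])
    |>.concat hx₂wx (by simp [hbip.symm.not_adj_of_mem_left, *])
  exact absurd (h4 _ hseq) (by simp)

lemma IsBipartitionOf.exists_not_adj (hbip : IsBipartitionOf G A B) (hftf : FalseTwinFree G)
    (hiso : NoIsolatedVerts G) (h4 : ∀ l, IsLegalSeq G l → l.length ≤ 4)
    (ht : 3 < totalDomNum G) {a : V} (ha : a ∈ A) : ∃ b ∈ B, ¬ G.Adj a b := by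
  by_contra! hab
  obtain ⟨b₀, hab₀⟩ := hiso a
  obtain ⟨b₁, -, b₂, -, hdom⟩ :=
    hbip.exists_pair_dominating hftf hiso h4 (hbip.mem_right_of_adj ha hab₀)
  have hS : IsTotalDomSet G {a, b₁, b₂} := fun v => by
    rcases hbip.1 v with ⟨hv, -⟩ | ⟨hv, -⟩
    · rcases hdom v hv with h | h <;> simp [h]
    · exact ⟨a, by simp, (hab v hv).symm⟩
  have hcard : ({a, b₁, b₂} : Set V).ncard ≤ 3 := by
    classical
    simpa using (Set.ncard_coe_finset {a, b₁, b₂}).trans_le Finset.card_le_three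
  have := totalDomNum_le_ncard hS
  omega

lemma IsBipartitionOf.adj_of_not_adj_of_adj (hbip : IsBipartitionOf G A B) (hftf : FalseTwinFree G)
    (hiso : NoIsolatedVerts G) (h4 : ∀ l, IsLegalSeq G l → l.length ≤ 4) {a a' b y : V}
    (ha : a ∈ A) (hb : b ∈ B) (hy : y ∈ B) (hab : ¬ G.Adj a b) (ha'b : G.Adj a' b)
    (hay : ¬ G.Adj a y) : G.Adj a' y := by
  by_contra ha'y
  obtain ⟨a'', hya''⟩ := hiso y
  have ha' := hbip.symm.mem_right_of_adj hb ha'b.symm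
  have ha'' := hbip.symm.mem_right_of_adj hy hya''
  have hB : B.Nontrivial := ⟨b, hb, y, hy, by rintro rfl; exact ha'y ha'b⟩
  obtain ⟨z₁, hz₁, z₂, hz₂, w, hz₂w, hz₁w⟩ := hftf.exists_adj_not_adj hB
  obtain ⟨u, hz₁u⟩ := hiso z₁
  have hu := hbip.symm.mem_right_of_adj hz₁ hz₁u
  have hw := hbip.symm.mem_right_of_adj hz₂ hz₂w
  have hseq : IsLegalSeq G [a, a', a'', z₁, z₂] := isLegalSeq_singleton a
    |>.concat ha'b (by simpa using hab)
    |>.concat hya''.symm (by simpa using ⟨hay, ha'y⟩)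
    |>.concat hz₁u (by simp [hbip.not_adj_of_mem_left, *])
    |>.concat hz₂w (by simp [hbip.not_adj_of_mem_left, *])
  exact absurd (h4 _ hseq) (by simp)

lemma IsBipartitionOf.existsUnique_not_adj (hbip : IsBipartitionOf G A B) (hftf : FalseTwinFree G)
    (hiso : NoIsolatedVerts G) (h4 : ∀ l, IsLegalSeq G l → l.length ≤ 4)
    (ht : 3 < totalDomNum G) (a : A) : ∃! b : B, ¬ G.Adj a b := by
  obtain ⟨b, hb, hab⟩ := hbip.exists_not_adj hftf hiso h4 ht a.2
  refine ⟨⟨b, hb⟩, hab, fun b' hab' => Subtype.ext <| by_contra fun hne => hftf b' b hne ?_⟩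
  ext x
  exact ⟨fun hx => (hbip.adj_of_not_adj_of_adj hftf hiso h4 a.2 b'.2 hb hab' hx.symm hab).symm,
    fun hx => (hbip.adj_of_not_adj_of_adj hftf hiso h4 a.2 hb b'.2 hab hx.symm hab').symm⟩

lemma IsBipartitionOf.exists_iso_knnMinusMatching [Finite V] (hbip : IsBipartitionOf G A B)
    (hftf : FalseTwinFree G) (hiso : NoIsolatedVerts G) (ht : 3 < totalDomNum G)
    (h4 : ∀ l, IsLegalSeq G l → l.length ≤ 4) :
    ∃ n : ℕ, 2 ≤ n ∧ Nonempty (G ≃g KnnMinusMatching n) := by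
  have hA := hbip.existsUnique_not_adj hftf hiso h4 ht
  have hB := hbip.symm.existsUnique_not_adj hftf hiso h4 ht
  refine ⟨Nat.card A, ?_, hbip.nonempty_iso_knnMinusMatching hA hB⟩
  obtain ⟨v⟩ : Nonempty V := by
    by_contra! hV
    have := totalDomNum_le_ncard (G := G) (S := ∅) isEmptyElim
    rw [Set.ncard_empty] at this
    omega
  obtain ⟨b, hb⟩ : B.Nonempty := by
    rcases hbip.1 v with ⟨hv, -⟩ | ⟨hv, -⟩
    · obtain ⟨w, hvw⟩ := hiso v
      exact ⟨w, hbip.mem_right_of_adj hv hvw⟩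
    · exact ⟨v, hv⟩
  obtain ⟨⟨a, ha⟩, hba, -⟩ := hB ⟨b, hb⟩
  obtain ⟨a', hba'⟩ := hiso b
  have hA2 : A.Nontrivial :=
    ⟨a, ha, a', hbip.symm.mem_right_of_adj hb hba', by rintro rfl; exact hba hba'⟩
  exact (Set.one_lt_ncard_iff_nontrivial).2 hA2

end ForwardDirection

/-- A bipartite false twin-free graph without isolated vertices has
`γ_t(G) = γ_gr^t(G) = 4` iff it is isomorphic to `K_{n,n} − M` for some `n ≥ 2`,
where `M` is a perfect matching of `K_{n,n}`. -/
theorem total_dom_eq_grundy_eq_four_iff {V : Type*} [Fintype V] (G : SimpleGraph V)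
    (hbip : ∃ A B : Set V, IsBipartitionOf G A B)
    (hftf : FalseTwinFree G) (hiso : NoIsolatedVerts G) :
    (totalDomNum G = 4 ∧ grundyTotalDomNum G = 4) ↔
      ∃ n : ℕ, 2 ≤ n ∧ Nonempty (G ≃g KnnMinusMatching n) := by
  constructor
  · rintro ⟨ht, hg⟩
    obtain ⟨A, B, hAB⟩ := hbip
    exact hAB.exists_iso_knnMinusMatching hftf hiso (by omega)
      fun l hl => hg ▸ hl.length_le_grundyTotalDomNum hiso
  · rintro ⟨n, hn, ⟨e⟩⟩
    rw [totalDomNum_congr e, grundyTotalDomNum_congr e]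
    exact ⟨KnnMinusMatching.totalDomNum_eq hn, KnnMinusMatching.grundyTotalDomNum_eq hn⟩
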